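/- The inequality N(AB) ≤ N(A) · N(B) holds for every n ≥ 1 and all A, B ∈ M_n(ℂ) (that is, N is submultiplicative for every n) if and only if σ² ≥ 1 + (1 + 2μ²)^{1/2}. -/

import Mathlib

open Matrix

/-- The Frobenius norm of a complex matrix. -/
noncomputable def frobNorm {n : ℕ} (A : Matrix (Fin n) (Fin n) ℂ) : ℝ :=
  Real.sqrt (∑ i, ∑ j, ‖A i j‖ ^ 2)

/-- The norm `N(Z) = ((1/2)σ²‖Z‖_F² + (1/2)μ²|tr Z|²)^(1/2)` on `M_n(ℂ)`. -/
noncomputable def N2 (σ μ : ℝ) {n : ℕ} (Z : Matrix (Fin n) (Fin n) ℂ) : ℝ :=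
  Real.sqrt ((1 / 2) * σ ^ 2 * frobNorm Z ^ 2 + (1 / 2) * μ ^ 2 * ‖Z.trace‖ ^ 2)

/-!
Both `‖AB‖_F` and `|tr (AB)|` are at most `‖A‖_F ‖B‖_F` (Cauchy–Schwarz), hence
`N(AB)² ≤ (σ²/2 + μ²/2) ‖A‖_F² ‖B‖_F² ≤ (σ²/2)² ‖A‖_F² ‖B‖_F² ≤ N(A)² N(B)²`
once `σ²/2 + μ²/2 ≤ (σ²/2)²`, i.e. `2σ² + 2μ² ≤ σ⁴` (that is, `γ ≤ 1`). Conversely, the matrix units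
satisfy `E₁₂ E₂₁ = E₁₁` with `N(E₁₁)² = σ²/2 + μ²/2` and `N(E₁₂)² = N(E₂₁)² = σ²/2`, so
submultiplicativity forces the same inequality. For `σ > 0` it is equivalent to
`σ² ≥ 1 + √(1 + 2μ²)`.
-/

namespace Matrix

attribute [local instance] frobeniusNormedAddCommGroup

variable {𝕜 m n : Type*} [RCLike 𝕜] [Fintype m] [Fintype n]

theorem frobenius_norm_eq_sqrt (A : Matrix m n 𝕜) : ‖A‖ = √(∑ i, ∑ j, ‖A i j‖ ^ 2) := by
  simp only [frobenius_norm_def, Real.rpow_two, Real.sqrt_eq_rpow]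

theorem frobenius_norm_trace_mul_le (A : Matrix m n 𝕜) (B : Matrix n m 𝕜) :
    ‖trace (A * B)‖ ≤ ‖A‖ * ‖B‖ := calc
  ‖trace (A * B)‖ = ‖∑ p : m × n, A p.1 p.2 * B p.2 p.1‖ := by
    simp only [trace, diag, mul_apply, Fintype.sum_prod_type]
  _ ≤ ∑ p : m × n, ‖A p.1 p.2‖ * ‖B p.2 p.1‖ := by
    simpa only [norm_mul] using norm_sum_le Finset.univ fun p : m × n ↦ A p.1 p.2 * B p.2 p.1
  _ ≤ √(∑ p : m × n, ‖A p.1 p.2‖ ^ 2) * √(∑ p : m × n, ‖B p.2 p.1‖ ^ 2) :=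
    Real.sum_mul_le_sqrt_mul_sqrt _ _ _
  _ = ‖A‖ * ‖B‖ := by
    rw [frobenius_norm_eq_sqrt, frobenius_norm_eq_sqrt, Fintype.sum_prod_type,
      Fintype.sum_prod_type_right]

end Matrix

section

attribute [local instance] Matrix.frobeniusNormedAddCommGroup

variable {n : ℕ}

theorem frobNorm_eq_frobenius_norm (A : Matrix (Fin n) (Fin n) ℂ) : frobNorm A = ‖A‖ :=
  (frobenius_norm_eq_sqrt A).symm

theorem frobNorm_mul_le (A B : Matrix (Fin n) (Fin n) ℂ) :
    frobNorm (A * B) ≤ frobNorm A * frobNorm B := by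
  simpa only [frobNorm_eq_frobenius_norm] using frobenius_norm_mul A B

theorem norm_trace_mul_le_frobNorm (A B : Matrix (Fin n) (Fin n) ℂ) :
    ‖(A * B).trace‖ ≤ frobNorm A * frobNorm B := by
  simpa only [frobNorm_eq_frobenius_norm] using frobenius_norm_trace_mul_le A B

theorem frobNorm_single (i j : Fin n) (c : ℂ) : frobNorm (single i j c) = ‖c‖ := by
  simp [frobNorm, single_apply, ite_and, apply_ite (fun x : ℂ ↦ ‖x‖ ^ 2)]

end

section

variable (σ μ : ℝ) {n : ℕ}

theorem N2_nonneg (Z : Matrix (Fin n) (Fin n) ℂ) : 0 ≤ N2 σ μ Z := Real.sqrt_nonneg _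

theorem N2_sq (Z : Matrix (Fin n) (Fin n) ℂ) :
    N2 σ μ Z ^ 2 = 1 / 2 * σ ^ 2 * frobNorm Z ^ 2 + 1 / 2 * μ ^ 2 * ‖Z.trace‖ ^ 2 :=
  Real.sq_sqrt (by positivity)

variable {σ μ}

theorem N2_mul_le (h : 2 * σ ^ 2 + 2 * μ ^ 2 ≤ (σ ^ 2) ^ 2) (A B : Matrix (Fin n) (Fin n) ℂ) :
    N2 σ μ (A * B) ≤ N2 σ μ A * N2 σ μ B := by
  rw [← pow_le_pow_iff_left₀ (N2_nonneg σ μ _)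
    (mul_nonneg (N2_nonneg σ μ A) (N2_nonneg σ μ B)) two_ne_zero, mul_pow, N2_sq, N2_sq, N2_sq]
  have hF : frobNorm (A * B) ^ 2 ≤ frobNorm A ^ 2 * frobNorm B ^ 2 := by
    rw [← mul_pow]; exact pow_le_pow_left₀ (Real.sqrt_nonneg _) (frobNorm_mul_le A B) 2
  have hT : ‖(A * B).trace‖ ^ 2 ≤ frobNorm A ^ 2 * frobNorm B ^ 2 := by
    rw [← mul_pow]; exact pow_le_pow_left₀ (norm_nonneg _) (norm_trace_mul_le_frobNorm A B) 2
  calc 1 / 2 * σ ^ 2 * frobNorm (A * B) ^ 2 + 1 / 2 * μ ^ 2 * ‖(A * B).trace‖ ^ 2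
      ≤ (1 / 2 * σ ^ 2 + 1 / 2 * μ ^ 2) * (frobNorm A ^ 2 * frobNorm B ^ 2) := by
        rw [add_mul]; gcongr
    _ ≤ (1 / 2 * σ ^ 2) ^ 2 * (frobNorm A ^ 2 * frobNorm B ^ 2) := by
        gcongr; linarith
    _ = (1 / 2 * σ ^ 2 * frobNorm A ^ 2) * (1 / 2 * σ ^ 2 * frobNorm B ^ 2) := by ring
    _ ≤ _ := by gcongr <;> exact le_add_of_nonneg_right (by positivity)

theorem le_sq_of_N2_single_mul_le {i j : Fin n} (hij : i ≠ j)
    (h : N2 σ μ (single i j 1 * single j i 1) ≤ N2 σ μ (single i j 1) * N2 σ μ (single j i 1)) :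
    2 * σ ^ 2 + 2 * μ ^ 2 ≤ (σ ^ 2) ^ 2 := by
  have hsq := pow_le_pow_left₀ (N2_nonneg σ μ _) h 2
  rw [single_mul_single_same, mul_pow, N2_sq, N2_sq, N2_sq, trace_single_eq_same,
    trace_single_eq_of_ne _ _ _ hij, trace_single_eq_of_ne _ _ _ hij.symm] at hsq
  simp only [frobNorm_single, mul_one, norm_one, norm_zero] at hsq
  linarith

end

theorem one_add_sqrt_le_iff {x c : ℝ} (hx : 0 < x) (hc : 0 ≤ c) :
    1 + √(1 + 2 * c) ≤ x ↔ 2 * x + 2 * c ≤ x ^ 2 := by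
  rw [← le_sub_iff_add_le', Real.sqrt_le_iff]
  constructor
  · rintro ⟨-, h⟩
    linarith
  · intro h
    constructor <;> nlinarith

/-- `N` is submultiplicative on `M_n(ℂ)` for every `n ≥ 1` if and only if
`σ² ≥ 1 + √(1 + 2μ²)`. -/
theorem submultiplicative_iff (σ μ : ℝ) (hσ : 0 < σ) :
    (∀ n : ℕ, 1 ≤ n → ∀ A B : Matrix (Fin n) (Fin n) ℂ,
      N2 σ μ (A * B) ≤ N2 σ μ A * N2 σ μ B) ↔
    1 + Real.sqrt (1 + 2 * μ ^ 2) ≤ σ ^ 2 := by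
  rw [one_add_sqrt_le_iff (by positivity) (sq_nonneg μ)]
  refine ⟨fun h ↦ ?_, fun h n _ A B ↦ N2_mul_le h A B⟩
  exact le_sq_of_N2_single_mul_le (i := (0 : Fin 2)) (j := 1) (by decide) (h 2 (by norm_num) _ _)
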